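/- arXiv:2111.04049 — 2 statements merged into one kernel-verified Lean document; each statement's English description precedes it below -/
import Mathlib

section
/- Let q ≥ 2 be an integer, let a be a q-fractal real formal power series, and for 1 ≤ n ≤ q−1 set l_n = [x^n] log a, where log is the ordinary formal power series logarithm. Then, with log_∘ the ∘-logarithm for the P_{[0,q]}-convolution: [x^N] log_∘ a = l_n whenever N = n·q^k with 1 ≤ n ≤ q−1 and k ≥ 0, and [x^N] log_∘ a = 0 for all other N (i.e., for N = 0 and for every N ≥ 1 having at least two nonzero base-q digits). Equivalently, log_∘ a = Σ_{n=1}^{q−1} l_n · Σ_{k≥0} x^{n·q^k}. -/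
/-!
With `f = a - 1`, the binomial theorem for the left `∘`-multiplication operators gives
`[x^N] a^{(s)} = Σ_i C(s, i) [x^N] f^{(i)}`, so `s ↦ [x^N] a^{(s)}` is a polynomial `P_N(s)`.
Since the binomial polynomial `C(s, i)` has derivative `(-1)^(i-1)/i` at `s = 0`, the
coefficient `[x^N] log_∘ a` is `P_N'(0)`: the `∘`-logarithm is `d/ds a^{(s)}` at `s = 0`.

The weight `W_q(N, M)` factors into the weights of the `k` lower and of the upper base-`q`
digits, and a fractal `a` factors in the same way; hence so does every `a^{(s)}`, and
`P_N = P_{N mod q^k} · P_{N div q^k}`. As `P_M(0) = [M = 0]`, the Leibniz rule at `s = 0` makes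
`log_∘ a` vanish when both parts of `N` are nonzero and invariant under `N ↦ q^k N`, while
below `q` the `∘`-powers are the ordinary powers.
-/

open PowerSeries Finset

open scoped Classical in
/-- The `(N,M)` entry of the generalized Sierpinski matrix `P_{[0,q]}`. -/
noncomputable def Wq (q N M : ℕ) : ℝ :=
  if ∀ r : ℕ, 1 ≤ r → M % q ^ r ≤ N % q ^ r then 1 else 0

/-- Convolution of formal power series with respect to a weight `w`. -/
noncomputable def conv (w : ℕ → ℕ → ℝ) (a b : PowerSeries ℝ) : PowerSeries ℝ :=
  PowerSeries.mk fun n => ∑ m ∈ Finset.range (n + 1), w n m * coeff m a * coeff (n - m) b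

/-- Iterated `∘`-power `f^{(k)}` with respect to a weight `w`. -/
noncomputable def convPow (w : ℕ → ℕ → ℝ) (f : PowerSeries ℝ) : ℕ → PowerSeries ℝ
  | 0 => 1
  | k + 1 => conv w f (convPow w f k)

/-- The `∘`-logarithm `log_∘ f = Σ_{n≥1} ((−1)^{n−1}/n)·(f−1)^{(n)}`. -/
noncomputable def convLog (w : ℕ → ℕ → ℝ) (f : PowerSeries ℝ) : PowerSeries ℝ :=
  PowerSeries.mk fun N =>
    ∑ n ∈ Finset.Icc 1 N, ((-1 : ℝ) ^ (n - 1) / n) * coeff N (convPow w (f - 1) n)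

/-- The ordinary formal power series logarithm. -/
noncomputable def logSeries (f : PowerSeries ℝ) : PowerSeries ℝ :=
  PowerSeries.mk fun N =>
    ∑ n ∈ Finset.Icc 1 N, ((-1 : ℝ) ^ (n - 1) / n) * coeff N ((f - 1) ^ n)

/-- A real formal power series is `q`-fractal if `a_0 = 1` and
`a_{qn+i} = a_n·a_i` for all `n ≥ 0` and `0 ≤ i < q`. -/
def IsFractal (q : ℕ) (a : PowerSeries ℝ) : Prop :=
  coeff 0 a = 1 ∧ ∀ n i : ℕ, i < q → coeff (q * n + i) a = coeff n a * coeff i a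

section Newton
open Polynomial
variable (K : Type*) [Field K] [CharZero K]

noncomputable def binomialPoly (i : ℕ) : K[X] := (i.factorial : K)⁻¹ • descPochhammer K i

lemma binomialPoly_eval_natCast (i s : ℕ) : (binomialPoly K i).eval (s : K) = s.choose i := by
  rw [binomialPoly, eval_smul, descPochhammer_eval_eq_descFactorial,
    Nat.descFactorial_eq_factorial_mul_choose, smul_eq_mul, Nat.cast_mul,
    inv_mul_cancel_left₀ (Nat.cast_ne_zero.2 i.factorial_ne_zero)]

lemma derivative_binomialPoly_eval_zero (i : ℕ) :
    (derivative (binomialPoly K (i + 1))).eval 0 = (-1) ^ i / (i + 1 : ℕ) := by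
  have hdesc : (descPochhammer K i).eval (-1) = (-1) ^ i * i.factorial := by
    have h := ascPochhammer_eval_neg_eq_descPochhammer K (-1) i
    rw [neg_neg, ascPochhammer_eval_one] at h
    rw [h, ← mul_assoc, ← mul_pow, neg_one_mul, neg_neg, one_pow, one_mul]
  rw [binomialPoly, derivative_smul, eval_smul, descPochhammer_succ_left, derivative_mul,
    eval_add, eval_mul, eval_mul, Polynomial.derivative_X, eval_X, eval_one, one_mul, zero_mul,
    add_zero, eval_comp, eval_sub, eval_X, eval_one, zero_sub, hdesc, Nat.factorial_succ,
    smul_eq_mul]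
  have : (i.factorial : K) ≠ 0 := Nat.cast_ne_zero.2 i.factorial_ne_zero
  push_cast
  field_simp

variable {K}

noncomputable def newtonPoly (e : ℕ → K) (n : ℕ) : K[X] :=
  ∑ i ∈ range (n + 1), e i • binomialPoly K i

variable (e : ℕ → K) (n : ℕ)

lemma newtonPoly_eval_natCast (s : ℕ) :
    (newtonPoly e n).eval (s : K) = ∑ i ∈ range (n + 1), (s.choose i : K) * e i := by
  simp only [newtonPoly, eval_finsetSum, eval_smul, binomialPoly_eval_natCast, smul_eq_mul,
    mul_comm]

lemma newtonPoly_eval_zero : (newtonPoly e n).eval 0 = e 0 := by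
  rw [← Nat.cast_zero, newtonPoly_eval_natCast, sum_range_succ']
  simp [Nat.choose_zero_succ]

lemma derivative_newtonPoly_eval_zero :
    (derivative (newtonPoly e n)).eval 0 = ∑ i ∈ Icc 1 n, ((-1 : K) ^ (i - 1) / i) * e i := by
  rw [newtonPoly, derivative_sum, eval_finsetSum, sum_range_succ', ← Ico_add_one_right_eq_Icc,
    sum_Ico_eq_sum_range, Nat.add_sub_cancel]
  simp only [derivative_smul, eval_smul, derivative_binomialPoly_eval_zero, smul_eq_mul,
    add_tsub_cancel_left, Nat.cast_add_one]
  simp [binomialPoly, add_comm 1, mul_comm]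

lemma Polynomial.eq_of_eval_natCast_eq {R : Type*} [CommRing R] [IsDomain R] [CharZero R]
    {P Q : R[X]} (h : ∀ s : ℕ, P.eval (s : R) = Q.eval (s : R)) : P = Q :=
  eq_of_infinite_eval_eq P Q <| (Set.infinite_range_of_injective Nat.cast_injective).mono <| by
    rintro _ ⟨s, rfl⟩; exact h s

end Newton

section Convolution
variable (w : ℕ → ℕ → ℝ)

lemma coeff_conv (f g : PowerSeries ℝ) (N : ℕ) :
    coeff N (conv w f g) = ∑ m ∈ range (N + 1), w N m * coeff m f * coeff (N - m) g :=
  coeff_mk _ _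

noncomputable def convLeft (f : PowerSeries ℝ) : PowerSeries ℝ →ₗ[ℝ] PowerSeries ℝ where
  toFun := conv w f
  map_add' g h := by ext N; simp [coeff_conv, mul_add, sum_add_distrib]
  map_smul' c g := by ext N; simp [coeff_conv, mul_sum, mul_left_comm]

lemma convPow_eq_pow_apply (f : PowerSeries ℝ) (n : ℕ) :
    convPow w f n = (convLeft w f ^ n) 1 := by
  induction n with
  | zero => rfl
  | succ n ih => rw [pow_succ', Module.End.mul_apply, ← ih]; rfl

lemma convLeft_eq_add_one (hw : ∀ N, w N 0 = 1) (a : PowerSeries ℝ) :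
    convLeft w a = convLeft w (a - 1) + 1 := by
  ext g N
  simp [convLeft, coeff_conv, sub_mul, mul_sub, sum_sub_distrib, PowerSeries.coeff_one, hw]

lemma convPow_eq_sum_choose_smul (hw : ∀ N, w N 0 = 1) (a : PowerSeries ℝ) (s : ℕ) :
    convPow w a s = ∑ i ∈ range (s + 1), (s.choose i : ℝ) • convPow w (a - 1) i := by
  rw [convPow_eq_pow_apply, convLeft_eq_add_one w hw, (Commute.one_right _).add_pow,
    LinearMap.sum_apply]
  refine sum_congr rfl fun i _ => ?_
  rw [one_pow, mul_one, Module.End.mul_apply, Module.End.natCast_apply, map_nsmul,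
    Nat.cast_smul_eq_nsmul, convPow_eq_pow_apply]

lemma coeff_convPow_eq_zero_of_lt {f : PowerSeries ℝ} (hf : coeff 0 f = 0) {N n : ℕ}
    (h : N < n) : coeff N (convPow w f n) = 0 := by
  induction n generalizing N with
  | zero => omega
  | succ n ih =>
    refine (coeff_conv w _ _ N).trans (sum_eq_zero fun m hm => ?_)
    rcases Nat.eq_zero_or_pos m with rfl | hm0
    · rw [hf, mul_zero, zero_mul]
    · rw [ih (by have := mem_range.1 hm; omega), mul_zero]

lemma coeff_convPow_eq_sum_choose (hw : ∀ N, w N 0 = 1) {a : PowerSeries ℝ} (ha : coeff 0 a = 1)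
    (M s : ℕ) :
    coeff M (convPow w a s) =
      ∑ i ∈ range (M + 1), (s.choose i : ℝ) * coeff M (convPow w (a - 1) i) := by
  have hf : coeff 0 (a - 1) = 0 := by rw [map_sub, ha, coeff_one, if_pos rfl, sub_self]
  rw [convPow_eq_sum_choose_smul w hw, map_sum]
  simp only [PowerSeries.coeff_smul, smul_eq_mul]
  calc _ = ∑ i ∈ range (s + M + 1), (s.choose i : ℝ) * coeff M (convPow w (a - 1) i) :=
        sum_subset (range_subset_range.2 (by omega)) fun i _ hi => by
          rw [Nat.choose_eq_zero_of_lt (by simp at hi; omega), Nat.cast_zero, zero_mul]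
    _ = _ := (sum_subset (range_subset_range.2 (by omega)) fun i _ hi => by
          rw [coeff_convPow_eq_zero_of_lt w hf (by simp at hi; omega), mul_zero]).symm

noncomputable def convPowPoly (a : PowerSeries ℝ) (M : ℕ) : Polynomial ℝ :=
  newtonPoly (fun i => coeff M (convPow w (a - 1) i)) M

lemma convPowPoly_eval_natCast (hw : ∀ N, w N 0 = 1) {a : PowerSeries ℝ} (ha : coeff 0 a = 1)
    (M s : ℕ) : (convPowPoly w a M).eval (s : ℝ) = coeff M (convPow w a s) := by
  rw [convPowPoly, newtonPoly_eval_natCast, coeff_convPow_eq_sum_choose w hw ha]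

lemma convPowPoly_eval_zero (a : PowerSeries ℝ) (M : ℕ) :
    (convPowPoly w a M).eval 0 = coeff M 1 :=
  newtonPoly_eval_zero _ M

lemma derivative_convPowPoly_eval_zero (a : PowerSeries ℝ) (M : ℕ) :
    (Polynomial.derivative (convPowPoly w a M)).eval 0 = coeff M (convLog w a) := by
  rw [convPowPoly, derivative_newtonPoly_eval_zero, convLog, coeff_mk]

theorem coeff_convLog_of_coeff_convPow_eq_mul (hw : ∀ N, w N 0 = 1) {a : PowerSeries ℝ}
    (ha : coeff 0 a = 1) {N L H : ℕ}
    (h : ∀ s, coeff N (convPow w a s) = coeff L (convPow w a s) * coeff H (convPow w a s)) :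
    coeff N (convLog w a) =
      coeff L (convLog w a) * coeff H 1 + coeff L 1 * coeff H (convLog w a) := by
  have hP : convPowPoly w a N = convPowPoly w a L * convPowPoly w a H :=
    Polynomial.eq_of_eval_natCast_eq fun s => by
      rw [Polynomial.eval_mul, convPowPoly_eval_natCast w hw ha, convPowPoly_eval_natCast w hw ha,
        convPowPoly_eval_natCast w hw ha, h]
  simp only [← derivative_convPowPoly_eval_zero, ← convPowPoly_eval_zero w a, hP,
    Polynomial.derivative_mul, Polynomial.eval_add, Polynomial.eval_mul]

end Convolution

section Digits
variable {q : ℕ}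

def DigitLE (q m n : ℕ) : Prop := ∀ r, m % q ^ r ≤ n % q ^ r

lemma Wq_eq_one {N M : ℕ} (h : DigitLE q M N) : Wq q N M = 1 :=
  if_pos fun r _ => h r

lemma Wq_eq_zero {N M : ℕ} (h : ¬ DigitLE q M N) : Wq q N M = 0 :=
  if_neg fun h' => h fun r => by
    rcases Nat.eq_zero_or_pos r with rfl | hr
    · simp [Nat.mod_one]
    · exact h' r hr

lemma Wq_zero_right (N : ℕ) : Wq q N 0 = 1 := Wq_eq_one fun r => by simp

lemma Wq_eq_one_of_lt {N M : ℕ} (hN : N < q) (hM : M ≤ N) : Wq q N M = 1 :=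
  Wq_eq_one fun r => by
    rcases Nat.eq_zero_or_pos r with rfl | hr
    · simp [Nat.mod_one]
    · have hNr : N < q ^ r := hN.trans_le (Nat.le_self_pow hr.ne' q)
      rwa [Nat.mod_eq_of_lt hNr, Nat.mod_eq_of_lt (hM.trans_lt hNr)]

lemma DigitLE.le (hq : 1 < q) {m n : ℕ} (h : DigitLE q m n) : m ≤ n := by
  have hlt : ∀ x ≤ m + n, x < q ^ (m + n) := fun x hx => hx.trans_lt (Nat.lt_pow_self hq)
  simpa [Nat.mod_eq_of_lt (hlt m (by omega)), Nat.mod_eq_of_lt (hlt n (by omega))] using h (m + n)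

lemma le_of_Wq_ne_zero (hq : 1 < q) {N M : ℕ} (h : Wq q N M ≠ 0) : M ≤ N := by
  by_contra hMN
  exact h (Wq_eq_zero fun h' => hMN (h'.le hq))

lemma digitLE_iff (hq : 0 < q) (k : ℕ) {m n : ℕ} :
    DigitLE q m n ↔
      DigitLE q (m % q ^ k) (n % q ^ k) ∧ DigitLE q (m / q ^ k) (n / q ^ k) := by
  have hlow : ∀ {r} x, r ≤ k → x % q ^ k % q ^ r = x % q ^ r := fun x hr =>
    Nat.mod_mod_of_dvd x (pow_dvd_pow q hr)
  have hhigh : ∀ {r} x, k ≤ r → x % q ^ k % q ^ r = x % q ^ k := fun x hr =>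
    Nat.mod_eq_of_lt ((Nat.mod_lt _ (by positivity)).trans_le (Nat.pow_le_pow_right hq hr))
  have hsplit : ∀ t x, x % q ^ (k + t) = x % q ^ k + q ^ k * (x / q ^ k % q ^ t) := fun t x => by
    rw [pow_add, Nat.mod_mul]
  constructor
  · intro h
    refine ⟨fun r => ?_, fun t => ?_⟩
    · rcases le_total r k with hr | hr
      · rw [hlow m hr, hlow n hr]; exact h r
      · rw [hhigh m hr, hhigh n hr]; exact h k
    · have hkt := h (k + t)
      rw [hsplit, hsplit] at hkt
      have hn : n % q ^ k < q ^ k := Nat.mod_lt _ (by positivity)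
      have : q ^ k * (m / q ^ k % q ^ t) < q ^ k * (n / q ^ k % q ^ t + 1) := by
        rw [Nat.mul_succ]; linarith [Nat.zero_le (m % q ^ k)]
      exact Nat.lt_succ_iff.1 (Nat.lt_of_mul_lt_mul_left this)
  · rintro ⟨hmod, hdiv⟩ r
    rcases le_total r k with hr | hr
    · rw [← hlow m hr, ← hlow n hr]; exact hmod r
    · obtain ⟨t, rfl⟩ := Nat.exists_eq_add_of_le hr
      rw [hsplit, hsplit]
      have := hmod k
      rw [Nat.mod_mod, Nat.mod_mod] at this
      exact add_le_add this (Nat.mul_le_mul_left _ (hdiv t))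

lemma Wq_eq_mul (hq : 0 < q) (k N M : ℕ) :
    Wq q N M = Wq q (N % q ^ k) (M % q ^ k) * Wq q (N / q ^ k) (M / q ^ k) := by
  by_cases h1 : DigitLE q (M % q ^ k) (N % q ^ k)
  · by_cases h2 : DigitLE q (M / q ^ k) (N / q ^ k)
    · rw [Wq_eq_one ((digitLE_iff hq k).2 ⟨h1, h2⟩), Wq_eq_one h1, Wq_eq_one h2, mul_one]
    · rw [Wq_eq_zero fun h => h2 ((digitLE_iff hq k).1 h).2, Wq_eq_zero h2, mul_zero]
  · rw [Wq_eq_zero fun h => h1 ((digitLE_iff hq k).1 h).1, Wq_eq_zero h1, zero_mul]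

lemma DigitLE.sub_mod_div (hq : 1 < q) {m n : ℕ} (h : DigitLE q m n) (k : ℕ) :
    (n - m) % q ^ k = n % q ^ k - m % q ^ k ∧ (n - m) / q ^ k = n / q ^ k - m / q ^ k := by
  have hpos : 0 < q ^ k := by positivity
  have hmod : m % q ^ k ≤ n % q ^ k := h k
  have hdiv : m / q ^ k ≤ n / q ^ k := (((digitLE_iff hq.pos k).1 h).2).le hq
  have hlt : n % q ^ k - m % q ^ k < q ^ k := (Nat.sub_le _ _).trans_lt (Nat.mod_lt _ hpos)
  have hsub : n - m = (n % q ^ k - m % q ^ k) + q ^ k * (n / q ^ k - m / q ^ k) := by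
    have := Nat.mul_le_mul_left (q ^ k) hdiv
    rw [Nat.mul_sub]
    have hm := Nat.mod_add_div m (q ^ k)
    have hn := Nat.mod_add_div n (q ^ k)
    omega
  rw [hsub, Nat.add_mul_mod_self_left, Nat.mod_eq_of_lt hlt, Nat.add_mul_div_left _ _ hpos,
    Nat.div_eq_of_lt hlt, zero_add]
  exact ⟨rfl, rfl⟩

end Digits

section DigitSplits
variable {q k : ℕ}

def DigitSplits (q k : ℕ) (g : PowerSeries ℝ) : Prop :=
  ∀ N, coeff N g = coeff (N % q ^ k) g * coeff (N / q ^ k) g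

lemma digitSplits_one : DigitSplits q k 1 := fun N => by
  rcases eq_or_ne N 0 with rfl | hN
  · simp
  have : N % q ^ k ≠ 0 ∨ N / q ^ k ≠ 0 := by
    by_contra! h
    exact hN (by rw [← Nat.mod_add_div N (q ^ k), h.1, h.2, mul_zero, add_zero])
  rcases this with h | h <;> simp [coeff_one, hN, h]

lemma IsFractal.digitSplits (hq : 0 < q) {a : PowerSeries ℝ} (ha : IsFractal q a) (k : ℕ) :
    DigitSplits q k a := by
  have hdigit : ∀ n, coeff n a = coeff (n / q) a * coeff (n % q) a := fun n => by
    conv_lhs => rw [← Nat.div_add_mod n q]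
    exact ha.2 _ _ (Nat.mod_lt _ hq)
  induction k with
  | zero => intro N; simp [Nat.mod_one, ha.1]
  | succ k ih =>
    intro N
    rw [hdigit N, ih (N / q), pow_succ', Nat.mod_mul, Nat.div_div_eq_div_mul, add_comm,
      ha.2 _ _ (Nat.mod_lt _ hq)]
    ring

lemma DigitSplits.conv (hq : 1 < q) {f g : PowerSeries ℝ} (hf : DigitSplits q k f)
    (hg : DigitSplits q k g) : DigitSplits q k (conv (Wq q) f g) := by
  intro N
  have hpos : 0 < q ^ k := by positivity
  set L := N % q ^ k
  set H := N / q ^ k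
  let T : ℕ → ℕ → ℝ := fun n m => Wq q n m * coeff m f * coeff (n - m) g
  have hT_le : ∀ {n m}, T n m ≠ 0 → m ≤ n := fun hT =>
    le_of_Wq_ne_zero hq (left_ne_zero_of_mul (left_ne_zero_of_mul hT))
  have hT : ∀ m, T N m = T L (m % q ^ k) * T H (m / q ^ k) := by
    intro m
    have hW := Wq_eq_mul hq.pos k N m
    by_cases hmN : DigitLE q m N
    · obtain ⟨hmod, hdiv⟩ := hmN.sub_mod_div hq k
      simp only [T]
      rw [hW, hf m, hg (N - m), hmod, hdiv]
      ring
    · rw [Wq_eq_zero hmN] at hW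
      simp only [T]
      rw [Wq_eq_zero hmN]
      linear_combination (coeff (m % q ^ k) f * coeff (L - m % q ^ k) g *
        coeff (m / q ^ k) f * coeff (H - m / q ^ k) g) * hW
  rw [coeff_conv, coeff_conv, coeff_conv, sum_mul_sum, ← sum_product']
  refine sum_bij_ne_zero (fun m _ _ => (m % q ^ k, m / q ^ k)) ?_ ?_ ?_ fun m _ _ => hT m
  · intro m _ hm
    replace hm : T L (m % q ^ k) * T H (m / q ^ k) ≠ 0 := hT m ▸ hm
    simp only [mem_product, mem_range, Nat.lt_succ_iff]
    exact ⟨hT_le (left_ne_zero_of_mul hm), hT_le (right_ne_zero_of_mul hm)⟩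
  · intro m₁ _ _ m₂ _ _ h
    simp only [Prod.mk.injEq] at h
    rw [← Nat.mod_add_div m₁ (q ^ k), ← Nat.mod_add_div m₂ (q ^ k), h.1, h.2]
  · rintro ⟨u, v⟩ - huv
    have hu : u < q ^ k := (hT_le (left_ne_zero_of_mul huv)).trans_lt (Nat.mod_lt _ hpos)
    have hmod : (u + q ^ k * v) % q ^ k = u := by
      rw [Nat.add_mul_mod_self_left, Nat.mod_eq_of_lt hu]
    have hdiv : (u + q ^ k * v) / q ^ k = v := by
      rw [Nat.add_mul_div_left _ _ hpos, Nat.div_eq_of_lt hu, zero_add]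
    have hne : T N (u + q ^ k * v) ≠ 0 := by rwa [hT, hmod, hdiv]
    exact ⟨u + q ^ k * v, mem_range.2 (Nat.lt_succ_of_le (hT_le hne)), hne, by rw [hmod, hdiv]⟩

lemma DigitSplits.convPow (hq : 1 < q) {a : PowerSeries ℝ} (ha : DigitSplits q k a) (s : ℕ) :
    DigitSplits q k (convPow (Wq q) a s) := by
  induction s with
  | zero => exact digitSplits_one
  | succ s ih => exact ha.conv hq ih

theorem IsFractal.coeff_convLog (hq : 1 < q) {a : PowerSeries ℝ} (ha : IsFractal q a)
    (k N : ℕ) :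
    coeff N (convLog (Wq q) a) =
      coeff (N % q ^ k) (convLog (Wq q) a) * coeff (N / q ^ k) 1 +
        coeff (N % q ^ k) 1 * coeff (N / q ^ k) (convLog (Wq q) a) :=
  coeff_convLog_of_coeff_convPow_eq_mul _ Wq_zero_right ha.1 fun s =>
    (ha.digitSplits hq.pos k).convPow hq s N

end DigitSplits

lemma coeff_convPow_Wq_of_lt {q N : ℕ} (hN : N < q) (f : PowerSeries ℝ) (n : ℕ) :
    coeff N (convPow (Wq q) f n) = coeff N (f ^ n) := by
  induction n generalizing N with
  | zero => rfl
  | succ n ih =>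
    rw [convPow, coeff_conv, pow_succ', coeff_mul, Nat.sum_antidiagonal_eq_sum_range_succ_mk]
    refine sum_congr rfl fun m hm => ?_
    have hm := mem_range.1 hm
    rw [Wq_eq_one_of_lt hN (by omega), one_mul, ih (by omega)]

lemma coeff_convLog_Wq_of_lt {q n : ℕ} (hn : n < q) (a : PowerSeries ℝ) :
    coeff n (convLog (Wq q) a) = coeff n (logSeries a) := by
  simp only [convLog, logSeries, coeff_mk, coeff_convPow_Wq_of_lt hn]

lemma coeff_zero_convLog (w : ℕ → ℕ → ℝ) (a : PowerSeries ℝ) :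
    coeff 0 (convLog w a) = 0 := by
  simp [convLog]

/-- For a `q`-fractal series `a`, `log_∘ a = Σ_{n=1}^{q−1} l_n · Σ_{k≥0} x^{n·q^k}`,
where `l_n = [x^n] log a`. -/
theorem stmt9 (q : ℕ) (hq : 2 ≤ q) (a : PowerSeries ℝ) (ha : IsFractal q a) :
    (∀ n k : ℕ, 1 ≤ n → n < q →
      coeff (n * q ^ k) (convLog (Wq q) a) = coeff n (logSeries a)) ∧
    (∀ N : ℕ, (¬ ∃ n k : ℕ, 1 ≤ n ∧ n < q ∧ N = n * q ^ k) →
      coeff N (convLog (Wq q) a) = 0) := by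
  have hpos : ∀ k, 0 < q ^ k := fun k => by positivity
  refine ⟨fun n k _ hnq => ?_, fun N hN => ?_⟩
  · rw [ha.coeff_convLog hq k, Nat.mul_mod_left, Nat.mul_div_cancel _ (hpos k),
      coeff_zero_convLog, zero_mul, zero_add, coeff_one, if_pos rfl, one_mul,
      coeff_convLog_Wq_of_lt hnq]
  rcases eq_or_ne N 0 with rfl | hN0
  · exact coeff_zero_convLog _ a
  set k := Nat.log q N
  have hH : N / q ^ k ≠ 0 := (Nat.div_pos (Nat.pow_log_le_self q hN0) (hpos k)).ne'
  have hL : N % q ^ k ≠ 0 := fun hL => hN ⟨N / q ^ k, k, Nat.one_le_iff_ne_zero.2 hH,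
    (Nat.div_lt_iff_lt_mul (hpos k)).2 (by rw [← pow_succ']; exact Nat.lt_pow_succ_log_self hq N),
    (Nat.div_mul_cancel (Nat.dvd_of_mod_eq_zero hL)).symm⟩
  rw [ha.coeff_convLog hq k, coeff_one, coeff_one, if_neg hH, if_neg hL, mul_zero, zero_mul,
    add_zero]
end

section
/- Let q ≥ 2 be an integer, n ≥ 1, and φ ∈ ℝ. Then φ·(φ+n)^{{n}−1} = Σ_{m=0}^n C_q(n,m)·φ^{{m}}·m·n^{{n−m}−1}, where (φ+n)^{{n}−1} is a natural number power (since {n} ≥ 1) and n^{{n−m}−1} denotes the integer power (zpow) of the positive real number n with exponent {n−m}−1, which equals −1 exactly when m = n. -/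
open Finset

/-- Base-`q` digit sum `{n} = Σ_t n_t`, where `n_t = n / q^t % q`. -/
def digitSum (q n : ℕ) : ℕ := ∑ t ∈ Finset.range (n + 1), n / q ^ t % q

/-- Fractal binomial coefficient `C_q(n,m) = Π_t binom(n_t, m_t)`. -/
def Cq (q n m : ℕ) : ℕ :=
  ∏ t ∈ Finset.range (n + m + 1), Nat.choose (n / q ^ t % q) (m / q ^ t % q)

/-!
Write `n = q a + b` with `b < q`. The digit sum and the fractal binomial coefficients split off the
last digit: `{q a + b} = b + {a}` and `C_q(q a + b, q c + d) = C(b, d) · C_q(a, c)`, and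
`C_q(n, m) = 0` for `m > n`. Hence `Σ_m C_q(n, m) φ^{m} x^{n-m}` factors into an ordinary binomial
sum over the last digit times the same sum for `a`, and induction on `n` gives the fractal binomial
theorem `Σ_m C_q(n, m) φ^{m} x^{n-m} = (φ + x)^{n}`. Splitting the weight `m = q c + d` the same
way gives `Σ_m C_q(n, m) m φ^{m} x^{n-m} = n φ (φ + x)^({n} - 1)`; the theorem is its case
`x = n`, divided by `n`.
-/

section Digits

variable {q : ℕ}

lemma div_pow_eq_zero_of_le (hq : 2 ≤ q) {n t : ℕ} (ht : n ≤ t) : n / q ^ t = 0 :=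
  Nat.div_eq_of_lt ((Nat.lt_pow_self hq).trans_le (Nat.pow_le_pow_right (by omega) ht))

lemma digitSum_eq_sum_range (hq : 2 ≤ q) {n N : ℕ} (hN : n ≤ N) :
    digitSum q n = ∑ t ∈ range N, n / q ^ t % q := by
  have hvanish : ∀ t ≥ n, n / q ^ t % q = 0 := fun t ht => by
    rw [div_pow_eq_zero_of_le hq ht, Nat.zero_mod]
  rw [digitSum, eventually_constant_sum hvanish n.le_succ, eventually_constant_sum hvanish hN]

lemma digitSum_eq_mod_add_digitSum_div (hq : 2 ≤ q) (n : ℕ) :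
    digitSum q n = n % q + digitSum q (n / q) := by
  rw [digitSum, sum_range_succ', digitSum_eq_sum_range hq (Nat.div_le_self n q), add_comm]
  simp only [pow_zero, Nat.div_one, pow_succ', Nat.div_div_eq_div_mul]

lemma digitSum_mul_add (hq : 2 ≤ q) {a b : ℕ} (hb : b < q) :
    digitSum q (q * a + b) = b + digitSum q a := by
  rw [digitSum_eq_mod_add_digitSum_div hq, Nat.mul_add_mod, Nat.mul_add_div (by omega),
    Nat.mod_eq_of_lt hb, Nat.div_eq_of_lt hb, add_zero]

lemma digitSum_pos (hq : 2 ≤ q) {n : ℕ} (hn : n ≠ 0) : 0 < digitSum q n := by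
  set t := Nat.log q n
  have hlead : n / q ^ t < q := Nat.div_lt_of_lt_mul (by
    rw [← pow_succ]; exact Nat.lt_pow_succ_log_self (by omega) n)
  calc 0 < n / q ^ t % q := by
        rw [Nat.mod_eq_of_lt hlead]
        exact Nat.div_pos (Nat.pow_log_le_self q hn) (by positivity)
    _ ≤ digitSum q n :=
        single_le_sum (f := fun t => n / q ^ t % q) (fun _ _ => Nat.zero_le _)
          (mem_range.2 (Nat.lt_succ_of_le (Nat.log_le_self q n)))

lemma Cq_eq_prod_range (hq : 2 ≤ q) {n m N : ℕ} (hn : n ≤ N) (hm : m ≤ N) :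
    Cq q n m = ∏ t ∈ range N, (n / q ^ t % q).choose (m / q ^ t % q) := by
  have hvanish : ∀ t ≥ max n m, (n / q ^ t % q).choose (m / q ^ t % q) = 1 := fun t ht => by
    rw [div_pow_eq_zero_of_le hq (le_of_max_le_left ht),
      div_pow_eq_zero_of_le hq (le_of_max_le_right ht)]
    rfl
  rw [Cq, eventually_constant_prod hvanish (by omega : max n m ≤ n + m + 1),
    eventually_constant_prod hvanish (by omega : max n m ≤ N)]

lemma Cq_eq_choose_mul_Cq_div (hq : 2 ≤ q) (n m : ℕ) :
    Cq q n m = (n % q).choose (m % q) * Cq q (n / q) (m / q) := by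
  rw [Cq, prod_range_succ', Cq_eq_prod_range hq (N := n + m)
    ((Nat.div_le_self n q).trans (by omega)) ((Nat.div_le_self m q).trans (by omega)), mul_comm]
  simp only [pow_zero, Nat.div_one, pow_succ', Nat.div_div_eq_div_mul]

lemma Cq_mul_add (hq : 2 ≤ q) {a b c d : ℕ} (hb : b < q) (hd : d < q) :
    Cq q (q * a + b) (q * c + d) = b.choose d * Cq q a c := by
  rw [Cq_eq_choose_mul_Cq_div hq]
  simp only [Nat.mul_add_mod, Nat.mul_add_div (by omega : q > 0), Nat.mod_eq_of_lt hb,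
    Nat.mod_eq_of_lt hd, Nat.div_eq_of_lt hb, Nat.div_eq_of_lt hd, add_zero]

lemma Cq_eq_zero_of_lt (hq : 2 ≤ q) {n m : ℕ} (h : n < m) : Cq q n m = 0 := by
  induction m using Nat.strong_induction_on generalizing n with
  | _ m ih =>
    rw [Cq_eq_choose_mul_Cq_div hq]
    by_cases hlast : n % q < m % q
    · rw [Nat.choose_eq_zero_of_lt hlast, zero_mul]
    · have hhigh : n / q < m / q := by
        by_contra! hle
        have := Nat.div_add_mod n q
        have := Nat.div_add_mod m q
        have := Nat.mul_le_mul_left q hle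
        omega
      rw [ih (m / q) (Nat.div_lt_self (by omega) (by omega)) hhigh, mul_zero]

end Digits

lemma sum_range_mul_eq_sum_sum {M : Type*} [AddCommMonoid M] (f : ℕ → M) (q k : ℕ) :
    ∑ m ∈ range (q * k), f m = ∑ c ∈ range k, ∑ d ∈ range q, f (q * c + d) := by
  induction k with
  | zero => simp
  | succ k ih => rw [Nat.mul_succ, sum_range_add, ih, sum_range_succ]

section FractalBinomial

variable {R : Type*} [CommSemiring R] {q : ℕ}

lemma sum_range_mul_choose_mul_pow (φ x : R) (b : ℕ) :
    ∑ d ∈ range (b + 1), (d : R) * (φ ^ d * x ^ (b - d) * b.choose d) =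
      b * φ * (φ + x) ^ (b - 1) := by
  cases b with
  | zero => simp
  | succ s =>
    have hterm : ∀ e ∈ range (s + 1),
        ((e + 1 : ℕ) : R) * (φ ^ (e + 1) * x ^ (s + 1 - (e + 1)) * (s + 1).choose (e + 1)) =
          ((s + 1 : ℕ) : R) * φ * (φ ^ e * x ^ (s - e) * s.choose e) := fun e _ => by
      have hchoose := congrArg (Nat.cast (R := R)) (Nat.add_one_mul_choose_eq s e)
      rw [Nat.cast_mul, Nat.cast_mul] at hchoose
      calc _ = φ * φ ^ e * x ^ (s - e) * ((s + 1).choose (e + 1) * ((e + 1 : ℕ) : R)) := by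
              rw [Nat.add_sub_add_right]; ring
        _ = _ := by rw [← hchoose]; ring
    rw [sum_range_succ', sum_congr rfl hterm, ← mul_sum, ← add_pow, Nat.add_sub_cancel]
    simp

lemma mul_pow_sub_one_mul_pow {k y : R} {i : ℕ} (h : k = 0 ∨ 1 ≤ i) (j : ℕ) :
    k * y ^ (i - 1) * y ^ j = k * y ^ (i + j - 1) := by
  rcases h with rfl | hi
  · simp
  · rw [mul_assoc, ← pow_add, Nat.sub_add_comm hi]

lemma sum_range_Cq_mul_eq_sum_sum (hq : 2 ≤ q) {a b : ℕ} (hb : b < q) (g : ℕ → ℕ → R) :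
    ∑ m ∈ range (q * a + b + 1), (Cq q (q * a + b) m : R) * g m (q * a + b - m) =
      ∑ c ∈ range (a + 1), ∑ d ∈ range (b + 1),
        (Cq q a c : R) * b.choose d * g (q * c + d) (q * (a - c) + (b - d)) := by
  have hle : q * a + b + 1 ≤ q * (a + 1) := by rw [Nat.mul_succ]; omega
  have hhigh : ∀ m ∈ range (q * (a + 1)), m ∉ range (q * a + b + 1) →
      (Cq q (q * a + b) m : R) * g m (q * a + b - m) = 0 := fun m _ hm => by
    rw [Cq_eq_zero_of_lt hq (by simpa using hm), Nat.cast_zero, zero_mul]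
  rw [sum_subset (range_subset_range.2 hle) hhigh, sum_range_mul_eq_sum_sum]
  refine sum_congr rfl fun c hc => ?_
  have hlow : ∀ d ∈ range q, d ∉ range (b + 1) →
      (Cq q (q * a + b) (q * c + d) : R) * g (q * c + d) (q * a + b - (q * c + d)) = 0 :=
    fun d hdq hd => by
      rw [Cq_mul_add hq hb (by simpa using hdq), Nat.choose_eq_zero_of_lt (by simpa using hd),
        zero_mul, Nat.cast_zero, zero_mul]
  rw [← sum_subset (range_subset_range.2 (by omega : b + 1 ≤ q)) hlow]
  refine sum_congr rfl fun d hd => ?_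
  simp only [mem_range] at hc hd
  have hsub : q * a + b - (q * c + d) = q * (a - c) + (b - d) := by
    have := Nat.mul_le_mul_left q (Nat.le_of_lt_succ hc)
    rw [Nat.mul_sub]; omega
  rw [Cq_mul_add hq hb (by omega), hsub, Nat.cast_mul, mul_comm (b.choose d : R)]

theorem sum_Cq_mul_pow_digitSum (hq : 2 ≤ q) (φ x : R) (n : ℕ) :
    ∑ m ∈ range (n + 1), (Cq q n m : R) * (φ ^ digitSum q m * x ^ digitSum q (n - m)) =
      (φ + x) ^ digitSum q n := by
  induction n using Nat.strong_induction_on with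
  | _ n ih =>
    rcases Nat.eq_zero_or_pos n with rfl | hn
    · simp [Cq, digitSum]
    obtain ⟨a, b, hb, rfl⟩ : ∃ a b, b < q ∧ n = q * a + b :=
      ⟨n / q, n % q, Nat.mod_lt _ (by omega), (Nat.div_add_mod n q).symm⟩
    have ha : a < q * a + b := by nlinarith
    rw [sum_range_Cq_mul_eq_sum_sum hq hb fun m k => φ ^ digitSum q m * x ^ digitSum q k]
    calc _ = ∑ c ∈ range (a + 1), ∑ d ∈ range (b + 1),
              (Cq q a c : R) * (φ ^ digitSum q c * x ^ digitSum q (a - c)) *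
                (φ ^ d * x ^ (b - d) * b.choose d) := by
          refine sum_congr rfl fun c hc => sum_congr rfl fun d hd => ?_
          simp only [mem_range] at hd
          rw [digitSum_mul_add hq (by omega), digitSum_mul_add hq (by omega)]
          ring
      _ = (φ + x) ^ digitSum q a * (φ + x) ^ b := by rw [← sum_mul_sum, ih a ha, ← add_pow]
      _ = _ := by rw [← pow_add, digitSum_mul_add hq hb, Nat.add_comm]

theorem sum_Cq_mul_natCast_mul_pow_digitSum (hq : 2 ≤ q) (φ x : R) (n : ℕ) :
    ∑ m ∈ range (n + 1), (Cq q n m : R) * (m * φ ^ digitSum q m * x ^ digitSum q (n - m)) =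
      n * φ * (φ + x) ^ (digitSum q n - 1) := by
  induction n using Nat.strong_induction_on with
  | _ n ih =>
    rcases Nat.eq_zero_or_pos n with rfl | hn
    · simp
    obtain ⟨a, b, hb, rfl⟩ : ∃ a b, b < q ∧ n = q * a + b :=
      ⟨n / q, n % q, Nat.mod_lt _ (by omega), (Nat.div_add_mod n q).symm⟩
    have ha : a < q * a + b := by nlinarith
    have hdigits : (a : R) = 0 ∨ 1 ≤ digitSum q a :=
      a.eq_zero_or_pos.imp (fun h => by simp [h]) fun h => digitSum_pos hq h.ne'
    rw [sum_range_Cq_mul_eq_sum_sum hq hb fun m k => (m : R) * φ ^ digitSum q m * x ^ digitSum q k]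
    calc _ = ∑ c ∈ range (a + 1), ∑ d ∈ range (b + 1),
              ((q : R) * ((Cq q a c : R) * (c * φ ^ digitSum q c * x ^ digitSum q (a - c)) *
                (φ ^ d * x ^ (b - d) * b.choose d)) +
              (Cq q a c : R) * (φ ^ digitSum q c * x ^ digitSum q (a - c)) *
                ((d : R) * (φ ^ d * x ^ (b - d) * b.choose d))) := by
          refine sum_congr rfl fun c hc => sum_congr rfl fun d hd => ?_
          simp only [mem_range] at hd
          rw [digitSum_mul_add hq (by omega), digitSum_mul_add hq (by omega)]
          push_cast
          ring
      _ = q * (a * φ * (φ + x) ^ (digitSum q a - 1) * (φ + x) ^ b) +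
            (φ + x) ^ digitSum q a * (b * φ * (φ + x) ^ (b - 1)) := by
          simp only [sum_add_distrib, ← mul_sum, ← sum_mul]
          rw [ih a ha, sum_Cq_mul_pow_digitSum hq, ← add_pow, sum_range_mul_choose_mul_pow]
      _ = q * φ * (a * (φ + x) ^ (digitSum q a - 1) * (φ + x) ^ b) +
            φ * (b * (φ + x) ^ (b - 1) * (φ + x) ^ digitSum q a) := by ring
      _ = _ := by
          have hb' : (b : R) = 0 ∨ 1 ≤ b := b.eq_zero_or_pos.imp (fun h => by simp [h]) id
          rw [mul_pow_sub_one_mul_pow hdigits, mul_pow_sub_one_mul_pow hb', digitSum_mul_add hq hb,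
            Nat.add_comm (digitSum q a)]
          push_cast
          ring

end FractalBinomial

/-- Fractal Abel identity:
`φ·(φ+n)^{{n}−1} = Σ_{m=0}^n C_q(n,m)·φ^{{m}}·m·n^{{n−m}−1}`, where the last power is an
integer power (zpow) of the positive real `n`. -/
theorem stmt18 (q : ℕ) (hq : 2 ≤ q) (n : ℕ) (hn : 1 ≤ n) (φ : ℝ) :
    φ * (φ + n) ^ (digitSum q n - 1) =
      ∑ m ∈ Finset.range (n + 1),
        (Cq q n m : ℝ) * φ ^ digitSum q m * m *
          (n : ℝ) ^ ((digitSum q (n - m) : ℤ) - 1) := by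
  have hn0 : (n : ℝ) ≠ 0 := Nat.cast_ne_zero.2 (by omega)
  have hterm : ∀ m ∈ range (n + 1),
      (Cq q n m : ℝ) * φ ^ digitSum q m * m * (n : ℝ) ^ ((digitSum q (n - m) : ℤ) - 1) =
        (Cq q n m : ℝ) * (m * φ ^ digitSum q m * (n : ℝ) ^ digitSum q (n - m)) / n :=
    fun m _ => by rw [zpow_sub_one₀ hn0, zpow_natCast]; ring
  rw [sum_congr rfl hterm, ← sum_div, sum_Cq_mul_natCast_mul_pow_digitSum hq]
  field_simp
end
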